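/- Let U ⊂ V_{n,m} with |U| ≤ n - m, where 1 ≤ m ≤ n. Then ζ^{n-m}(U) = ∅. -/

import Mathlib

/-- `Vnm n m` is the collection of all `m`-element subsets of `{0,...,n-1}`. -/
def Vnm (n m : ℕ) : Set (Finset ℕ) := {b | b ⊆ Finset.range n ∧ b.card = m}

/-- The ζ-operator: unions of pairs of members of `U` intersecting in `m - 1` elements. -/
def zeta (m : ℕ) (U : Set (Finset ℕ)) : Set (Finset ℕ) :=
  {x | ∃ c ∈ U, ∃ d ∈ U, (c ∩ d).card = m - 1 ∧ x = c ∪ d}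

/-- Iterated ζ-operator: `ζ^0(U) = U`, `ζ^{v+1}(U) = ζ(ζ^v(U))`
(the level parameter increases by one at each step since `ζ^v(U) ⊆ V_{n,m+v}`). -/
def zetaIter (m : ℕ) : ℕ → Set (Finset ℕ) → Set (Finset ℕ)
  | 0, U => U
  | v + 1, U => zeta (m + v) (zetaIter m v U)

/-- The union `⋃ U` of all members of a family of finite sets. -/
def unionAll (U : Set (Finset ℕ)) : Set ℕ := ⋃ b ∈ U, (b : Set ℕ)

/-- The induced subgraph `G[U]` of the Johnson graph `J_{n,m}`:
vertices are the members of `U`, two of them adjacent iff distinct with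
intersection of cardinality `m - 1`. -/
def inducedGraph (m : ℕ) (U : Set (Finset ℕ)) : SimpleGraph U where
  Adj x y := (x : Finset ℕ) ≠ (y : Finset ℕ) ∧ ((x : Finset ℕ) ∩ (y : Finset ℕ)).card = m - 1
  symm := ⟨fun x y ⟨h1, h2⟩ => ⟨h1.symm, by rwa [Finset.inter_comm]⟩⟩
  loopless := ⟨fun x ⟨h1, _⟩ => h1 rfl⟩

/-- The connected components of `G[U]`, viewed as subsets of `U`. -/
def componentSets (m : ℕ) (U : Set (Finset ℕ)) : Set (Set (Finset ℕ)) :=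
  {Z | ∃ C : (inducedGraph m U).ConnectedComponent,
    Z = Subtype.val '' {x : U | (inducedGraph m U).connectedComponentMk x = C}}

/-! Every member of `ζ^v(U)` is the union of at least `v + 1` members of `U`, since each
application of `ζ` joins two distinct sets of the same size, and the family producing the
second one cannot be contained in the family producing the first. So `ζ^v(U)` is empty as
soon as `U` has at most `v` members. -/

section ZetaIter

variable {m : ℕ} {U : Set (Finset ℕ)}

lemma card_of_mem_zetaIter (hm : 1 ≤ m) (hU : ∀ b ∈ U, b.card = m) :
    ∀ {v : ℕ} {x : Finset ℕ}, x ∈ zetaIter m v U → x.card = m + v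
  | 0, _, hx => hU _ hx
  | v + 1, _, ⟨c, hc, d, hd, hcd, hx⟩ => by
    have hc' := card_of_mem_zetaIter hm hU hc
    have hd' := card_of_mem_zetaIter hm hU hd
    have := Finset.card_union_add_card_inter c d
    rw [hx]
    omega

lemma exists_finset_sup_eq_of_mem_zetaIter (hm : 1 ≤ m) (hU : ∀ b ∈ U, b.card = m) :
    ∀ {v : ℕ} {x : Finset ℕ}, x ∈ zetaIter m v U →
      ∃ S : Finset (Finset ℕ), ↑S ⊆ U ∧ v + 1 ≤ S.card ∧ S.sup id = x
  | 0, x, hx =>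
    ⟨{x}, by rw [Finset.coe_singleton, Set.singleton_subset_iff]; exact hx, le_rfl,
      Finset.sup_singleton⟩
  | v + 1, _, ⟨c, hc, d, hd, hcd, hx⟩ => by
    obtain ⟨Sc, hScU, hScard, rfl⟩ := exists_finset_sup_eq_of_mem_zetaIter hm hU hc
    obtain ⟨Sd, hSdU, -, rfl⟩ := exists_finset_sup_eq_of_mem_zetaIter hm hU hd
    have hc' := card_of_mem_zetaIter hm hU hc
    have hd' := card_of_mem_zetaIter hm hU hd
    -- `Sd ⊆ Sc` would give `d ⊆ c`, hence `d = c` by size, against `|c ∩ d| < |c|`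
    have hSd_not_sub : ¬ Sd ⊆ Sc := fun hsub => by
      have hdc := Finset.eq_of_subset_of_card_le (Finset.sup_mono (f := id) hsub) (by omega)
      rw [hdc, Finset.inter_self] at hcd
      omega
    refine ⟨Sc ∪ Sd, by simpa using And.intro hScU hSdU, ?_, by rw [hx, Finset.sup_union]; rfl⟩
    have hssub : Sc ⊂ Sc ∪ Sd := left_lt_sup.mpr hSd_not_sub
    have := Finset.card_lt_card hssub
    omega

theorem zetaIter_eq_empty_of_ncard_le (hm : 1 ≤ m) (hU : ∀ b ∈ U, b.card = m)
    (hfin : U.Finite) {v : ℕ} (hcard : U.ncard ≤ v) : zetaIter m v U = ∅ := by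
  refine Set.eq_empty_of_forall_notMem fun x hx => ?_
  obtain ⟨S, hSU, hS, -⟩ := exists_finset_sup_eq_of_mem_zetaIter hm hU hx
  have := Set.ncard_le_ncard hSU hfin
  rw [Set.ncard_coe_finset] at this
  omega

end ZetaIter

lemma Vnm_finite (n m : ℕ) : (Vnm n m).Finite :=
  (Finset.range n).powerset.finite_toSet.subset fun _ hb => Finset.mem_powerset.mpr hb.1

theorem stmt11_general (n m : ℕ) (hm : 1 ≤ m)
    (U : Set (Finset ℕ)) (hU : U ⊆ Vnm n m) (hcard : U.ncard ≤ n - m) :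
    zetaIter m (n - m) U = ∅ :=
  zetaIter_eq_empty_of_ncard_le hm (fun _ hb => (hU hb).2) ((Vnm_finite n m).subset hU) hcard

theorem stmt11 (n m : ℕ) (hm : 1 ≤ m) (hmn : m ≤ n)
    (U : Set (Finset ℕ)) (hU : U ⊆ Vnm n m) (hcard : U.ncard ≤ n - m) :
    zetaIter m (n - m) U = ∅ :=
  stmt11_general n m hm U hU hcard
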